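/- arXiv:2107.03083 — 7 statements merged into one kernel-verified Lean document; each statement's English description precedes it below -/
import Mathlib

section
/- Let N be a network with binary collision profile, T ≥ D*, and let (A_0, A_1, ..., A_k) be a closed path (A_k = A_0) in the scheduling graph (M_T, E_T). Then the schedule S with period kT defined by S[T, i mod k] = A_{i mod k} for all i ∈ ℤ is collision free. -/
/-- Collision freeness for a binary collision profile `I : L → Set L`. -/
def CollisionFreeB {L : Type*} (I : L → Set L) (D : L → L → ℤ)
    (S : L → ℤ → Bool) : Prop :=
  ∀ l t, S l t = true → ∀ l' ∈ I l, S l' (t + D l l') = false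

/-- `blk S T k` is the `|L| × T` block of `S` with columns `kT, …, (k+1)T − 1`. -/
def blk {L : Type*} (S : L → ℤ → Bool) (T : ℕ) (k : ℤ) : L → Fin T → Bool :=
  fun l j => S l (k * T + (j : ℕ))

/-- Vertex set of the scheduling graph (binary collision profile). -/
def MTb {L : Type*} (I : L → Set L) (D : L → L → ℤ) (T : ℕ) :
    Set (L → Fin T → Bool) :=
  {A | ∃ S, CollisionFreeB I D S ∧ A = blk S T 0}

/-- Edge set of the scheduling graph (binary collision profile). -/
def ETb {L : Type*} (I : L → Set L) (D : L → L → ℤ) (T : ℕ) :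
    Set ((L → Fin T → Bool) × (L → Fin T → Bool)) :=
  {p | ∃ S, CollisionFreeB I D S ∧ p.1 = blk S T 0 ∧ p.2 = blk S T 1}

/-!
A collision is a pair of times `t`, `t + D l l'` at distance at most `T`, so it lies in a window
of two consecutive blocks of `S`. Along the periodic schedule built from a closed path, any two
consecutive blocks form an edge `(A_i, A_{i+1})` of the scheduling graph, i.e. they are the first
two blocks of some collision-free schedule `S'`; a collision of `S` inside the window would be a
collision of `S'`.
-/

theorem Function.Periodic.apply_add_eq_emod_add {α : Type*} {f : ℤ → α} {k : ℤ}
    (hf : Function.Periodic f k) (q j : ℤ) : f (q + j) = f (q % k + j) := by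
  rw [← hf.int_mul (q / k) (q % k + j), Int.cast_id]
  congr 1
  linarith [Int.mul_ediv_add_emod q k]

section Blocks

variable {L : Type*} {T : ℕ}

theorem apply_eq_of_blk_eq {S S' : L → ℤ → Bool} {q p : ℤ} (h : blk S T q = blk S' T p)
    (l : L) {s : ℤ} (hs₀ : 0 ≤ s) (hsT : s < T) : S l (q * T + s) = S' l (p * T + s) := by
  have := congrFun (congrFun h l) ⟨s.toNat, by omega⟩
  simpa only [blk, Int.toNat_of_nonneg hs₀] using this

theorem apply_eq_of_blk_pair_eq {S S' : L → ℤ → Bool} {q : ℤ}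
    (h₀ : blk S T q = blk S' T 0) (h₁ : blk S T (q + 1) = blk S' T 1)
    (l : L) {s : ℤ} (hs₀ : 0 ≤ s) (hsT : s < 2 * T) : S l (q * T + s) = S' l s := by
  rcases lt_or_ge s T with hs | hs
  · simpa using apply_eq_of_blk_eq h₀ l hs₀ hs
  · have := apply_eq_of_blk_eq h₁ l (s := s - T) (by omega) (by omega)
    rwa [show (q + 1) * T + (s - T) = q * T + s by ring, one_mul, add_sub_cancel] at this

theorem exists_window_of_abs_le (hT : 1 ≤ T) (t d : ℤ) (hd : |d| ≤ T) :
    ∃ q : ℤ, (0 ≤ t - q * T ∧ t - q * T < 2 * T) ∧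
      (0 ≤ t + d - q * T ∧ t + d - q * T < 2 * T) := by
  have hT₀ : (0 : ℤ) < T := by exact_mod_cast hT
  refine ⟨min t (t + d) / T, ?_⟩
  have h₀ := Int.emod_nonneg (min t (t + d)) hT₀.ne'
  have h₁ := Int.emod_lt_of_pos (min t (t + d)) hT₀
  have hq : min t (t + d) / T * T = min t (t + d) - min t (t + d) % T := by
    linarith [Int.mul_ediv_add_emod (min t (t + d)) T]
  have := abs_le.mp hd
  rw [hq]
  omega

theorem collisionFreeB_of_forall_blk_pair_mem {I : L → Set L} {D : L → L → ℤ}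
    (hT : 1 ≤ T) (hDT : ∀ l, ∀ l' ∈ I l, |D l l'| ≤ (T : ℤ)) {S : L → ℤ → Bool}
    (hS : ∀ q : ℤ, (blk S T q, blk S T (q + 1)) ∈ ETb I D T) :
    CollisionFreeB I D S := by
  intro l t hlt l' hl'
  obtain ⟨q, ⟨ht₀, ht₁⟩, ⟨htd₀, htd₁⟩⟩ := exists_window_of_abs_le hT t (D l l') (hDT l l' hl')
  obtain ⟨S', hS', h₀, h₁⟩ := hS q
  have hwin := apply_eq_of_blk_pair_eq h₀ h₁
  have hS'l : S' l (t - q * T) = true := by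
    rw [← hwin l ht₀ ht₁, add_sub_cancel, hlt]
  have := hS' l _ hS'l l' hl'
  rwa [sub_add_eq_add_sub, ← hwin l' htd₀ htd₁, add_sub_cancel] at this

theorem blk_periodic {S : L → ℤ → Bool} {k : ℕ}
    (hper : ∀ l t, S l (t + (k * T : ℕ)) = S l t) :
    Function.Periodic (blk S T) (k : ℤ) := by
  intro q
  funext l j
  simp only [blk]
  rw [← hper l (q * T + j)]
  push_cast
  ring_nf

end Blocks

/-- binary collision profile, `T ≥ D*`; the periodic schedule of
period `kT` obtained from a closed path `(A_0, …, A_k)` (with `A_k = A_0`) in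
the scheduling graph `(M_T, E_T)` is collision free. -/
theorem stmt_5 {L : Type*} (I : L → Set L) (D : L → L → ℤ)
    (T k : ℕ) (hT : 1 ≤ T) (hk : 1 ≤ k)
    (hDT : ∀ l, ∀ l' ∈ I l, |D l l'| ≤ (T : ℤ))
    (A : ℕ → (L → Fin T → Bool))
    (hpath : ∀ i < k, A i ∈ MTb I D T ∧ (A i, A (i + 1)) ∈ ETb I D T)
    (hclosed : A k = A 0)
    (S : L → ℤ → Bool)
    (hper : ∀ l t, S l (t + (k * T : ℕ)) = S l t)
    (hblk : ∀ i < k, blk S T (i : ℤ) = A i) :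
    CollisionFreeB I D S := by
  have hP := blk_periodic hper
  have hblk_le : ∀ i ≤ k, blk S T (i : ℤ) = A i := by
    intro i hi
    rcases hi.lt_or_eq with hi | rfl
    · exact hblk i hi
    · rw [hclosed]
      exact hP.eq.trans (hblk 0 hk)
  refine collisionFreeB_of_forall_blk_pair_mem hT hDT fun q => ?_
  have hk₀ : (0 : ℤ) < k := by exact_mod_cast hk
  set i := (q % k).toNat
  have hi : i < k := by have := Int.emod_lt_of_pos q hk₀; omega
  have hq (j : ℤ) : blk S T (q + j) = blk S T (i + j) := by
    rw [hP.apply_add_eq_emod_add, Int.toNat_of_nonneg (Int.emod_nonneg q hk₀.ne')]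
  have h₀ : blk S T q = A i := by simpa using (hq 0).trans (hblk_le i hi.le)
  have h₁ : blk S T (q + 1) = A (i + 1) := by
    rw [hq 1]
    exact_mod_cast hblk_le (i + 1) hi
  rw [h₀, h₁]
  exact (hpath i hi).2
end

section
/- The rate region R^N of a network N is a convex subset of ℝ^L. -/
open scoped Classical

open Filter

/-- Average over `t = 0, …, T−1` of the indicator that link `l` is active and
collision free at time `t` under schedule `S`. -/
noncomputable def rateAvg {L : Type*} (I : L → Set (Set L)) (D : L → L → ℤ)
    (S : L → ℤ → Bool) (l : L) (T : ℕ) : ℝ :=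
  (∑ t ∈ Finset.range T,
      if S l (t : ℤ) = true ∧ ∀ φ ∈ I l, ∃ l' ∈ φ, S l' ((t : ℤ) + D l l') = false
      then (1 : ℝ) else 0) / T

/-- A rate vector `R` is achievable if for every `ε > 0` there is a schedule
whose rate vector exists and dominates `R − ε` componentwise. -/
noncomputable def Achievable {L : Type*} (I : L → Set (Set L)) (D : L → L → ℤ)
    (R : L → ℝ) : Prop :=
  ∀ ε : ℝ, 0 < ε → ∃ (S : L → ℤ → Bool) (r : L → ℝ),
    (∀ l, Tendsto (rateAvg I D S l) atTop (nhds (r l))) ∧ ∀ l, R l - ε ≤ r l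

/-! Interleave two schedules periodically: a stretch of `⌊a x⌋` slots copied from `S₁`, a stretch of
`⌊b x⌋` slots copied from `S₂`, each followed by a silent guard interval at least as long as
every delay. The guards isolate the stretches, so every collision-free transmission of `S₁` or
`S₂` in a copied stretch stays collision free; periodicity makes the rate exist; and as `x → ∞`
the guards become negligible, so the rate exceeds `a r₁ + b r₂ - ε` for large `x`. -/

open Finset

theorem Function.Periodic.sum_range_mul_add {M : Type*} [AddCommMonoid M] {f : ℕ → M} {P : ℕ}
    (hf : Function.Periodic f P) (q r : ℕ) :
    ∑ t ∈ range (q * P + r), f t = q • ∑ t ∈ range P, f t + ∑ t ∈ range r, f t := by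
  induction q generalizing r with
  | zero => simp
  | succ q ih =>
    rw [add_mul, one_mul, add_assoc, ih, sum_range_add, succ_nsmul, add_assoc]
    congr 2
    exact sum_congr rfl fun t _ => by rw [add_comm, hf t]

theorem Function.Periodic.tendsto_sum_range_div {f : ℕ → ℝ} {P : ℕ} (hf : Function.Periodic f P)
    (hP : 0 < P) :
    Tendsto (fun T : ℕ => (∑ t ∈ range T, f t) / T) atTop
      (nhds ((∑ t ∈ range P, f t) / P)) := by
  set A := ∑ t ∈ range P, f t
  -- the discrepancy from `T * (A / P)` only depends on `T % P`
  set e : ℕ → ℝ := fun r => ∑ t ∈ range r, f t - r * (A / P)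
  have hsum : ∀ T : ℕ, ∑ t ∈ range T, f t = T * (A / P) + e (T % P) := by
    intro T
    conv_lhs => rw [← Nat.div_add_mod' T P, hf.sum_range_mul_add]
    have hT : (T : ℝ) = (T / P : ℕ) * P + (T % P : ℕ) := by
      exact_mod_cast (Nat.div_add_mod' T P).symm
    simp only [e, hT, nsmul_eq_mul]
    field_simp
    ring
  have he : ∀ T : ℕ, ‖e (T % P) / T‖ ≤ (∑ r ∈ range P, |e r|) / T := by
    intro T
    rw [norm_div, Real.norm_natCast, Real.norm_eq_abs]
    gcongr
    exact single_le_sum (f := fun r => |e r|) (fun _ _ => abs_nonneg _)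
      (mem_range.2 (Nat.mod_lt T hP))
  have hlim := (tendsto_const_nhds (x := A / P)).add
    (squeeze_zero_norm he (tendsto_const_div_atTop_nhds_zero_nat _))
  rw [add_zero] at hlim
  refine hlim.congr' ?_
  filter_upwards [eventually_ne_atTop 0] with T hT
  rw [hsum]
  field_simp

lemma tendsto_floor_mul_div {F : ℕ → ℝ} {r a : ℝ}
    (hF : Tendsto (fun n : ℕ => F n / n) atTop (nhds r)) (ha : 0 < a) :
    Tendsto (fun x : ℝ => F ⌊a * x⌋₊ / x) atTop (nhds (r * a)) := by
  have hn : Tendsto (fun x : ℝ => ⌊a * x⌋₊) atTop atTop :=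
    tendsto_nat_floor_atTop.comp (tendsto_id.const_mul_atTop ha)
  refine ((hF.comp hn).mul (tendsto_nat_floor_mul_div_atTop ha.le)).congr' ?_
  filter_upwards [hn.eventually_ne_atTop 0, eventually_gt_atTop 0] with x hx₀ hx
  simp only [Function.comp_apply]
  field_simp

lemma tendsto_sum_div_floor_add_floor {F₁ F₂ : ℕ → ℝ} {r₁ r₂ a b : ℝ}
    (hF₁ : Tendsto (fun n : ℕ => F₁ n / n) atTop (nhds r₁))
    (hF₂ : Tendsto (fun n : ℕ => F₂ n / n) atTop (nhds r₂))
    (ha : 0 < a) (hb : 0 < b) (hab : a + b = 1) (g : ℕ) :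
    Tendsto (fun x : ℝ => (F₁ ⌊a * x⌋₊ + F₂ ⌊b * x⌋₊) / (⌊a * x⌋₊ + g + ⌊b * x⌋₊ + g : ℕ))
      atTop (nhds (a * r₁ + b * r₂)) := by
  have hnum := (tendsto_floor_mul_div hF₁ ha).add (tendsto_floor_mul_div hF₂ hb)
  have hden := ((tendsto_nat_floor_mul_div_atTop ha.le).add
    (tendsto_nat_floor_mul_div_atTop hb.le)).add
    (tendsto_const_nhds (x := (2 * g : ℝ)).div_atTop tendsto_id)
  rw [hab, add_zero] at hden
  have := hnum.div hden one_ne_zero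
  rw [div_one, mul_comm r₁, mul_comm r₂] at this
  refine this.congr' ?_
  filter_upwards [eventually_gt_atTop 0] with x hx
  simp only [Pi.div_apply, id]
  push_cast
  field_simp
  ring

namespace RateRegion

section Indicator

variable {L : Type*} (I : L → Set (Set L)) (D : L → L → ℤ)

/-- The summand of `rateAvg`: `rateAvg I D S l T` is by definition the average of
`collisionFreeIndicator I D S l` over `[0, T)`. -/
noncomputable def collisionFreeIndicator (S : L → ℤ → Bool) (l : L) (t : ℤ) : ℝ :=
  if S l t = true ∧ ∀ φ ∈ I l, ∃ l' ∈ φ, S l' (t + D l l') = false then 1 else 0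

variable {I D}

lemma collisionFreeIndicator_nonneg (S : L → ℤ → Bool) (l : L) (t : ℤ) :
    0 ≤ collisionFreeIndicator I D S l t := by
  unfold collisionFreeIndicator; split_ifs <;> norm_num

lemma collisionFreeIndicator_shift (S : L → ℤ → Bool) (c : ℤ) (l : L) (t : ℤ) :
    collisionFreeIndicator I D (fun l s => S l (c + s)) l t =
      collisionFreeIndicator I D S l (c + t) := by
  simp only [collisionFreeIndicator, add_assoc]

lemma collisionFreeIndicator_mono {S S' : L → ℤ → Bool} {l : L} {t : ℤ}
    (hl : S l t = true → S' l t = true)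
    (hlisten : ∀ l', S' l' (t + D l l') = true → S l' (t + D l l') = true) :
    collisionFreeIndicator I D S l t ≤ collisionFreeIndicator I D S' l t := by
  unfold collisionFreeIndicator
  split_ifs with hS hS'
  · rfl
  · refine absurd ⟨hl hS.1, fun φ hφ => ?_⟩ hS'
    obtain ⟨l', hl', hfree⟩ := hS.2 φ hφ
    refine ⟨l', hl', ?_⟩
    contrapose! hfree
    simpa using hlisten l' (by simpa using hfree)
  all_goals norm_num

lemma tendsto_rateAvg_of_periodic {S : L → ℤ → Bool} {P : ℕ}
    (hS : ∀ l, Function.Periodic (S l) P) (hP : 0 < P) (l : L) :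
    Tendsto (rateAvg I D S l) atTop
      (nhds ((∑ t ∈ range P, collisionFreeIndicator I D S l t) / P)) := by
  have hper : Function.Periodic (fun t : ℕ => collisionFreeIndicator I D S l t) P := fun t => by
    simp only [collisionFreeIndicator, Nat.cast_add, hS _ _, add_right_comm _ (P : ℤ)]
  exact hper.tendsto_sum_range_div hP

lemma collisionFreeIndicator_le_of_eq_ite {g n : ℕ} (hD : ∀ l l', |D l l'| ≤ g)
    {S S' : L → ℤ → Bool}
    (hS' : ∀ l (s : ℤ), -g ≤ s → s < n + g → S' l s = if 0 ≤ s ∧ s < n then S l s else false)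
    (l : L) {t : ℕ} (ht : t < n) :
    collisionFreeIndicator I D S l t ≤ collisionFreeIndicator I D S' l t := by
  refine collisionFreeIndicator_mono (fun h => ?_) fun l' h => ?_
  · rw [hS' l t (by omega) (by omega), if_pos (by omega)]
    exact h
  · have := abs_le.1 (hD l l')
    rw [hS' l' _ (by omega) (by omega)] at h
    split_ifs at h
    exact h

end Indicator

section Interleave

variable {L : Type*}

def interleave (S₁ S₂ : L → ℤ → Bool) (n₁ n₂ g : ℕ) (l : L) (t : ℤ) : Bool :=
  let s := t % (n₁ + g + n₂ + g : ℕ)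
  if s < n₁ then S₁ l s else if n₁ + g ≤ s ∧ s < n₁ + g + n₂ then S₂ l (s - (n₁ + g)) else false

variable (S₁ S₂ : L → ℤ → Bool) (n₁ n₂ g : ℕ)

lemma interleave_periodic (l : L) :
    Function.Periodic (interleave S₁ S₂ n₁ n₂ g l) (n₁ + g + n₂ + g : ℕ) := fun t => by
  simp only [interleave, Int.add_emod_right]

lemma interleave_eq_ite_left (l : L) {s : ℤ} (hs : -g ≤ s) (hs' : s < n₁ + g) :
    interleave S₁ S₂ n₁ n₂ g l s = if 0 ≤ s ∧ s < n₁ then S₁ l s else false := by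
  rcases le_or_gt 0 s with h0 | h0
  · have hmod : s % (n₁ + g + n₂ + g : ℕ) = s := Int.emod_eq_of_lt h0 (by push_cast; omega)
    simp only [interleave, hmod]
    split_ifs <;> first | rfl | omega
  · have hmod : s % (n₁ + g + n₂ + g : ℕ) = s + (n₁ + g + n₂ + g : ℕ) := by
      rw [← Int.add_emod_right, Int.emod_eq_of_lt] <;> push_cast <;> omega
    simp only [interleave, hmod]
    split_ifs <;> first | rfl | omega

lemma interleave_eq_ite_right (l : L) {s : ℤ} (hs : -g ≤ s) (hs' : s < n₂ + g) :
    interleave S₁ S₂ n₁ n₂ g l (n₁ + g + s) = if 0 ≤ s ∧ s < n₂ then S₂ l s else false := by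
  have hmod : (n₁ + g + s) % (n₁ + g + n₂ + g : ℕ) = n₁ + g + s :=
    Int.emod_eq_of_lt (by omega) (by push_cast; omega)
  simp only [interleave, hmod, add_sub_cancel_left]
  split_ifs <;> first | rfl | omega

end Interleave

section Combination

variable {L : Type*} {I : L → Set (Set L)} {D : L → L → ℤ}

lemma sum_collisionFreeIndicator_le_interleave (S₁ S₂ : L → ℤ → Bool) (n₁ n₂ : ℕ) {g : ℕ}
    (hD : ∀ l l', |D l l'| ≤ g) (l : L) :
    ∑ t ∈ range n₁, collisionFreeIndicator I D S₁ l t +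
        ∑ t ∈ range n₂, collisionFreeIndicator I D S₂ l t ≤
      ∑ t ∈ range (n₁ + g + n₂ + g), collisionFreeIndicator I D (interleave S₁ S₂ n₁ n₂ g) l t := by
  set f := fun t : ℕ => collisionFreeIndicator I D (interleave S₁ S₂ n₁ n₂ g) l t
  have hf : ∀ t, 0 ≤ f t := fun t => collisionFreeIndicator_nonneg _ l t
  have hleft : ∀ t ∈ range n₁, collisionFreeIndicator I D S₁ l t ≤ f t := fun t ht =>
    collisionFreeIndicator_le_of_eq_ite hD
      (fun l _ hs hs' => interleave_eq_ite_left S₁ S₂ n₁ n₂ g l hs hs') l (mem_range.1 ht)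
  have hright : ∀ t ∈ range n₂, collisionFreeIndicator I D S₂ l t ≤ f (n₁ + g + t) :=
      fun t ht => by
    have := collisionFreeIndicator_le_of_eq_ite (I := I)
      (S' := fun l s => interleave S₁ S₂ n₁ n₂ g l (n₁ + g + s)) hD
      (fun l _ hs hs' => interleave_eq_ite_right S₁ S₂ n₁ n₂ g l hs hs') l (mem_range.1 ht)
    simpa only [f, collisionFreeIndicator_shift, Nat.cast_add] using this
  calc _ ≤ ∑ t ∈ range n₁, f t + ∑ t ∈ range n₂, f (n₁ + g + t) :=
        add_le_add (sum_le_sum hleft) (sum_le_sum hright)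
    _ ≤ ∑ t ∈ range (n₁ + g), f t + ∑ t ∈ range n₂, f (n₁ + g + t) := by
        gcongr ?_ + _
        exact sum_le_sum_of_subset_of_nonneg (range_subset_range.2 (by omega)) fun t _ _ => hf t
    _ = ∑ t ∈ range (n₁ + g + n₂), f t := (sum_range_add f _ _).symm
    _ ≤ _ := by
        rw [sum_range_add f (n₁ + g + n₂)]
        exact le_add_of_nonneg_right (sum_nonneg fun t _ => hf _)

lemma exists_schedule_rate_ge_combination [Fintype L] {S₁ S₂ : L → ℤ → Bool} {r₁ r₂ : L → ℝ}
    (h₁ : ∀ l, Tendsto (rateAvg I D S₁ l) atTop (nhds (r₁ l)))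
    (h₂ : ∀ l, Tendsto (rateAvg I D S₂ l) atTop (nhds (r₂ l)))
    {a b : ℝ} (ha : 0 < a) (hb : 0 < b) (hab : a + b = 1) {ε : ℝ} (hε : 0 < ε) :
    ∃ (S : L → ℤ → Bool) (r : L → ℝ),
      (∀ l, Tendsto (rateAvg I D S l) atTop (nhds (r l))) ∧
        ∀ l, a * r₁ l + b * r₂ l - ε ≤ r l := by
  obtain ⟨g, hg⟩ := Finite.exists_le fun p : L × L => (D p.1 p.2).natAbs
  have hD : ∀ l l', |D l l'| ≤ g := fun l l' => by
    rw [Int.abs_eq_natAbs]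
    exact_mod_cast hg (l, l')
  have hlim (l : L) := tendsto_sum_div_floor_add_floor (h₁ l) (h₂ l) ha hb hab g
  have hn₁ : Tendsto (fun x : ℝ => ⌊a * x⌋₊) atTop atTop :=
    tendsto_nat_floor_atTop.comp (tendsto_id.const_mul_atTop ha)
  obtain ⟨x, hx, hx₁⟩ := ((eventually_all.2 fun l =>
    (hlim l).eventually (Ioi_mem_nhds (sub_lt_self _ hε))).and
    (hn₁.eventually_gt_atTop 0)).exists
  set n₁ := ⌊a * x⌋₊
  set n₂ := ⌊b * x⌋₊
  refine ⟨interleave S₁ S₂ n₁ n₂ g,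
    fun l => (∑ t ∈ range (n₁ + g + n₂ + g),
      collisionFreeIndicator I D (interleave S₁ S₂ n₁ n₂ g) l t) / (n₁ + g + n₂ + g : ℕ),
    tendsto_rateAvg_of_periodic (interleave_periodic S₁ S₂ n₁ n₂ g) (by omega), fun l => ?_⟩
  exact (hx l).le.trans (div_le_div_of_nonneg_right
    (sum_collisionFreeIndicator_le_interleave S₁ S₂ n₁ n₂ hD l) (by positivity))

end Combination

end RateRegion

/-- the rate region of a network is a convex subset of `ℝ^L`. -/
theorem stmt_6 {L : Type*} [Fintype L] (I : L → Set (Set L)) (D : L → L → ℤ) :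
    Convex ℝ {R : L → ℝ | Achievable I D R} := by
  refine convex_iff_forall_pos.2 fun R₁ hR₁ R₂ hR₂ a b ha hb hab ε hε => ?_
  obtain ⟨S₁, r₁, h₁, hr₁⟩ := hR₁ (ε / 2) (half_pos hε)
  obtain ⟨S₂, r₂, h₂, hr₂⟩ := hR₂ (ε / 2) (half_pos hε)
  obtain ⟨S, r, hS, hr⟩ :=
    RateRegion.exists_schedule_rate_ge_combination h₁ h₂ ha hb hab (half_pos hε)
  refine ⟨S, r, hS, fun l => ?_⟩
  have := add_le_add (mul_le_mul_of_nonneg_left (hr₁ l) ha.le)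
    (mul_le_mul_of_nonneg_left (hr₂ l) hb.le)
  simp only [Pi.add_apply, Pi.smul_apply, smul_eq_mul]
  linear_combination this + hr l + (ε / 2) * hab
end

section
/- Every rate vector in the rate region R^N of a network N can be achieved using only collision-free periodic schedules: for any achievable R and any ε > 0, there exists a collision-free schedule S with finite period T_p (i.e., S(l,t) = S(l, t+T_p) for all l, t) such that R_S(l) ≥ R(l) − ε for all l ∈ L. -/
open scoped Classical

open Filter

/-- Collision freeness for a general collision profile. -/
def CollisionFree {L : Type*} (I : L → Set (Set L)) (D : L → L → ℤ)
    (S : L → ℤ → Bool) : Prop :=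
  ∀ l t, S l t = true → ∀ φ ∈ I l, ∃ l' ∈ φ, S l' (t + D l l') = false

/-!
Take a schedule `S₀` achieving `R - ε/2` and a window `[0, T)` on which every link already
succeeds at rate `> R - 3ε/4`. Repeat that window with period `T + D*`, keeping only the slots
`t ∈ [D*, T)` at which `S₀` succeeds. A link active in the copy at `t` has its interference
checks at `t + D(l, l')` with `|D(l, l')| ≤ D*`, which stay inside the same period, where the
copy is a subset of `S₀`; so the periodic schedule is collision free. It loses at most `D*`
successful slots per window and gains `D*` slots of period length, which costs less than `ε/4`
once `T ≥ 8 D*/ε`.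
-/

open Finset Topology

namespace Function.Periodic

theorem sum_range_add_period {g : ℕ → ℝ} {p : ℕ} (hg : Periodic g p) (n : ℕ) :
    ∑ t ∈ range (n + p), g t = ∑ t ∈ range n, g t + ∑ t ∈ range p, g t := by
  induction n with
  | zero => simp
  | succ n ih => rw [Nat.add_right_comm, sum_range_succ, ih, hg, sum_range_succ]; ring

theorem tendsto_cesaro {g : ℕ → ℝ} {p : ℕ} (hg : Periodic g p) (hp : 0 < p) :
    Tendsto (fun N : ℕ => (∑ t ∈ range N, g t) / N) atTop
      (𝓝 ((∑ t ∈ range p, g t) / p)) := by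
  set A := (∑ t ∈ range p, g t) / p
  set F : ℕ → ℝ := fun N => ∑ t ∈ range N, g t - N * A
  -- the deviation `F` from the linear growth `N * A` is itself periodic, hence bounded
  have hF : Periodic F p := fun n => by
    have : (p : ℝ) ≠ 0 := by positivity
    simp only [F, A, hg.sum_range_add_period]; push_cast; field_simp; ring
  obtain ⟨C, hC⟩ : ∃ C, ∀ n, |F n| ≤ C :=
    ⟨∑ s ∈ range p, |F s|, fun n => hF.map_mod_nat n ▸
      single_le_sum (f := fun s => |F s|) (fun _ _ => abs_nonneg _)
        (mem_range.2 (Nat.mod_lt n hp))⟩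
  have hFN : Tendsto (fun N : ℕ => F N / N) atTop (𝓝 0) :=
    squeeze_zero_norm (fun N => by
        rw [norm_div, Real.norm_eq_abs, Real.norm_natCast]
        exact div_le_div_of_nonneg_right (hC N) N.cast_nonneg)
      (tendsto_const_div_atTop_nhds_zero_nat C)
  refine (zero_add A ▸ hFN.add_const A).congr' ?_
  filter_upwards [eventually_ne_atTop 0] with N hN
  have : (N : ℝ) ≠ 0 := by exact_mod_cast hN
  simp only [F]; field_simp; ring

end Function.Periodic

section Network

variable {L : Type*} (I : L → Set (Set L)) (D : L → L → ℤ)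

def Succeeds (S : L → ℤ → Bool) (l : L) (t : ℤ) : Prop :=
  S l t = true ∧ ∀ φ ∈ I l, ∃ l' ∈ φ, S l' (t + D l l') = false

theorem rateAvg_eq (S : L → ℤ → Bool) (l : L) (T : ℕ) :
    rateAvg I D S l T = (∑ t ∈ range T, if Succeeds I D S l t then (1 : ℝ) else 0) / T := by
  unfold rateAvg
  congr 1
  exact sum_congr rfl fun t _ => if_congr Iff.rfl rfl rfl

theorem rateAvg_le_one (S : L → ℤ → Bool) (l : L) (T : ℕ) : rateAvg I D S l T ≤ 1 := by
  rw [rateAvg_eq]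
  refine div_le_one_of_le₀ ?_ T.cast_nonneg
  calc ∑ t ∈ range T, (if Succeeds I D S l t then (1 : ℝ) else 0)
      ≤ ∑ _t ∈ range T, (1 : ℝ) := sum_le_sum fun _ _ => by split_ifs <;> norm_num
    _ = T := by simp

theorem rateAvg_of_collisionFree {S : L → ℤ → Bool} (hS : CollisionFree I D S) (l : L)
    (T : ℕ) :
    rateAvg I D S l T = (∑ t ∈ range T, if S l t = true then (1 : ℝ) else 0) / T := by
  rw [rateAvg_eq]
  congr 1
  exact sum_congr rfl fun t _ => if_congr ⟨And.left, fun h => ⟨h, hS l t h⟩⟩ rfl rfl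

/-- The first `d` slots of each period form a guard band against delays of size at most `d`. -/
noncomputable def periodize (S : L → ℤ → Bool) (T d : ℕ) (l : L) (t : ℤ) : Bool :=
  decide (d ≤ t % (T + d : ℕ) ∧ t % (T + d : ℕ) < T ∧ Succeeds I D S l (t % (T + d : ℕ)))

theorem periodize_periodic (S : L → ℤ → Bool) (T d : ℕ) (l : L) :
    Function.Periodic (periodize I D S T d l) (T + d : ℕ) := fun t => by
  simp only [periodize, Int.add_emod_right]

theorem collisionFree_periodize {d : ℕ} (hD : ∀ l, ∀ φ ∈ I l, ∀ l' ∈ φ, |D l l'| ≤ (d : ℤ))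
    (S : L → ℤ → Bool) (T : ℕ) : CollisionFree I D (periodize I D S T d) := by
  intro l t ht φ hφ
  simp only [periodize, decide_eq_true_eq] at ht
  obtain ⟨hdu, huT, -, hsucc⟩ := ht
  obtain ⟨l', hl', hS₀⟩ := hsucc φ hφ
  refine ⟨l', hl', ?_⟩
  obtain ⟨hDlo, hDhi⟩ := abs_le.1 (hD l φ hφ l' hl')
  have hshift : (t + D l l') % (T + d : ℕ) = t % (T + d : ℕ) + D l l' := by
    rw [← Int.emod_add_emod, Int.emod_eq_of_lt (by omega) (by omega)]
  simp only [periodize, hshift, Succeeds, hS₀, decide_eq_false_iff_not]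
  simp

theorem periodize_of_succeeds {S : L → ℤ → Bool} {l : L} {T d t : ℕ} (hdt : d ≤ t) (htT : t < T)
    (hs : Succeeds I D S l t) : periodize I D S T d l t = true := by
  have htd : ((t : ℤ) % (T + d : ℕ)) = t := Int.emod_eq_of_lt t.cast_nonneg (by omega)
  simp only [periodize, htd, decide_eq_true_eq]
  exact ⟨by omega, by omega, hs⟩

theorem sum_succeeds_le_sum_periodize_add (S : L → ℤ → Bool) (l : L) (T d : ℕ) :
    ∑ t ∈ range T, (if Succeeds I D S l t then (1 : ℝ) else 0) ≤
      ∑ t ∈ range (T + d), (if periodize I D S T d l t = true then (1 : ℝ) else 0) + d := by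
  have hslot : ∀ t ∈ range T, (if Succeeds I D S l t then (1 : ℝ) else 0) ≤
      (if periodize I D S T d l t = true then 1 else 0) + if t < d then 1 else 0 := by
    intro t ht
    by_cases hdt : t < d
    · simp only [hdt, if_true]; split_ifs <;> norm_num
    · by_cases hs : Succeeds I D S l t
      · simp only [hs, periodize_of_succeeds I D (not_lt.1 hdt) (mem_range.1 ht) hs, hdt,
          if_true, if_false]
        norm_num
      · simp only [hs, if_false]; positivity
  have hguard : ∑ t ∈ range T, (if t < d then (1 : ℝ) else 0) ≤ d := by
    rw [sum_boole]
    exact_mod_cast (card_le_card fun t ht => mem_range.2 (mem_filter.1 ht).2).trans_eq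
      (card_range d)
  have hwindow : ∑ t ∈ range T, (if periodize I D S T d l t = true then (1 : ℝ) else 0) ≤
      ∑ t ∈ range (T + d), (if periodize I D S T d l t = true then (1 : ℝ) else 0) :=
    sum_le_sum_of_subset_of_nonneg (range_subset_range.2 (by omega)) fun _ _ _ => by positivity
  calc _ ≤ ∑ t ∈ range T, ((if periodize I D S T d l t = true then (1 : ℝ) else 0) +
          if t < d then 1 else 0) := sum_le_sum hslot
    _ ≤ _ := by rw [sum_add_distrib]; linarith

theorem rateAvg_sub_le_periodize (S : L → ℤ → Bool) (l : L) {T d : ℕ} (hT : 0 < T) {δ : ℝ}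
    (hδ : 0 ≤ δ) (hdT : 2 * d ≤ δ * T) :
    rateAvg I D S l T - δ ≤
      (∑ t ∈ range (T + d), if periodize I D S T d l t = true then (1 : ℝ) else 0) /
        (T + d : ℕ) := by
  have hcount := sum_succeeds_le_sum_periodize_add I D S l T d
  rw [← div_mul_cancel₀ (∑ t ∈ range T, _) (show (T : ℝ) ≠ 0 by positivity), ← rateAvg_eq]
    at hcount
  have hrate := rateAvg_le_one I D S l T
  rw [le_div_iff₀ (by positivity)]
  push_cast
  nlinarith [mul_le_mul_of_nonneg_right hrate (d.cast_nonneg : (0 : ℝ) ≤ d),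
    mul_nonneg hδ d.cast_nonneg]

end Network

/-- every achievable rate vector can be approached using only
collision-free periodic schedules. -/
theorem stmt_7 {L : Type*} [Fintype L] (I : L → Set (Set L)) (D : L → L → ℤ)
    (Dstar : ℕ) (hD : ∀ l, ∀ φ ∈ I l, ∀ l' ∈ φ, |D l l'| ≤ (Dstar : ℤ))
    (R : L → ℝ) (hR : Achievable I D R) (ε : ℝ) (hε : 0 < ε) :
    ∃ (S : L → ℤ → Bool) (Tp : ℕ), 1 ≤ Tp ∧
      (∀ l t, S l (t + (Tp : ℤ)) = S l t) ∧
      CollisionFree I D S ∧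
      ∃ r : L → ℝ, (∀ l, Tendsto (rateAvg I D S l) atTop (nhds (r l))) ∧
        ∀ l, R l - ε ≤ r l := by
  obtain ⟨S₀, r, hconv, hr⟩ := hR (ε / 2) (by positivity)
  have hgood : ∀ᶠ T : ℕ in atTop, ∀ l, r l - ε / 4 < rateAvg I D S₀ l T :=
    eventually_all.2 fun l => (hconv l).eventually (eventually_gt_nhds (by linarith))
  have hlong : ∀ᶠ T : ℕ in atTop, 2 * (Dstar : ℝ) ≤ ε / 4 * T :=
    (tendsto_natCast_atTop_atTop.const_mul_atTop (by positivity)).eventually_ge_atTop _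
  obtain ⟨T, hT, hTlong, hT0⟩ := (hgood.and (hlong.and (eventually_gt_atTop 0))).exists
  set S := periodize I D S₀ T Dstar
  have hS : CollisionFree I D S := collisionFree_periodize I D hD S₀ T
  have hper : ∀ l, Function.Periodic (S l) (T + Dstar : ℕ) := periodize_periodic I D S₀ T Dstar
  refine ⟨S, T + Dstar, by omega, hper, hS,
    fun l => (∑ t ∈ range (T + Dstar), if S l t = true then (1 : ℝ) else 0) / (T + Dstar : ℕ),
    fun l => ?_, fun l => ?_⟩
  · simp only [funext (rateAvg_of_collisionFree I D hS l)]
    exact Function.Periodic.tendsto_cesaro (fun t => by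
      rw [Nat.cast_add t, hper]) (by omega)
  · linarith [hr l, hT l, rateAvg_sub_le_periodize I D S₀ l hT0 (by positivity) hTlong]
end

section
/- Consider a network with binary collision profile and a framed schedule S of frame length T_F ≥ 2D* + 1. Then S is collision free if and only if for every frame k and every link l active in frame k, every link l' ∈ I(l) is inactive in frame k. -/
/-- A framed schedule of frame length `TF` with guard interval `Dstar`:
all links are inactive before time `0`; in each frame `k` every link is
inactive during the last `Dstar` slots, and is constant (all active or all
inactive) over the first `TF − Dstar` slots. -/
def Framed {L : Type*} (Dstar TF : ℕ) (S : L → ℤ → Bool) : Prop :=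
  (∀ l (t : ℤ), t < 0 → S l t = false) ∧
  (∀ l (k i : ℕ), TF - Dstar ≤ i → i < TF → S l ((k : ℤ) * TF + i) = false) ∧
  (∀ l (k i j : ℕ), i < TF - Dstar → j < TF - Dstar →
    S l ((k : ℤ) * TF + i) = S l ((k : ℤ) * TF + j))

/-!
Since `TF ≥ 2 D* + 1`, the active part of a frame has more than `D*` slots, so for a delay `d`
with `|d| ≤ D*` both `max (-d) 0` and `max d 0` are active slots of the same frame: a link active
in frame `k` would hit every interfering link active in frame `k`. Conversely, a transmission in
the active part of frame `k` arrives between `D*` slots before frame `k` (the guard of frame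
`k - 1`, or negative time) and the end of frame `k`, where a link inactive in frame `k` is silent.
-/

namespace Framed

variable {L : Type*} {Dstar TF : ℕ} {S : L → ℤ → Bool}

theorem apply_frame_add (hS : Framed Dstar TF S) (l : L) (k : ℕ) {i : ℕ}
    (hi : i < TF - Dstar) : S l ((k : ℤ) * TF + i) = S l ((k : ℤ) * TF) := by
  simpa using hS.2.2 l k i 0 hi (by omega)

/-- For `k = 0` the window lies at negative times, otherwise in the guard of frame `k - 1`. -/
theorem apply_eq_false_of_mem_guard (hS : Framed Dstar TF S) (hDTF : Dstar ≤ TF) (l : L)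
    (k : ℕ) {t : ℤ} (ht₁ : (k : ℤ) * TF - Dstar ≤ t) (ht₂ : t < (k : ℤ) * TF) :
    S l t = false := by
  rcases k with _ | k
  · exact hS.1 l t (by simpa using ht₂)
  · push_cast [add_one_mul] at ht₁ ht₂
    have hguard := hS.2.1 l k (t - k * TF).toNat (by omega) (by omega)
    rwa [Int.toNat_of_nonneg (by omega), add_sub_cancel] at hguard

theorem apply_eq_false_of_frameStart (hS : Framed Dstar TF S) (hDTF : Dstar ≤ TF) {l : L}
    {k : ℕ} (hk : S l ((k : ℤ) * TF) = false) {t : ℤ} (ht₁ : (k : ℤ) * TF - Dstar ≤ t)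
    (ht₂ : t < (k : ℤ) * TF + TF) : S l t = false := by
  rcases lt_or_ge t ((k : ℤ) * TF) with ht | ht
  · exact hS.apply_eq_false_of_mem_guard hDTF l k ht₁ ht
  obtain ⟨i, rfl⟩ : ∃ i : ℕ, t = (k : ℤ) * TF + i := ⟨(t - k * TF).toNat, by omega⟩
  rcases lt_or_ge i (TF - Dstar) with hi | hi
  · rwa [hS.apply_frame_add l k hi]
  · exact hS.2.1 l k i hi (by omega)

theorem exists_frame_of_apply_eq_true (hS : Framed Dstar TF S) (hTF : 0 < TF) {l : L}
    {t : ℤ} (ht : S l t = true) :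
    ∃ k i : ℕ, i < TF - Dstar ∧ t = (k : ℤ) * TF + i ∧ S l ((k : ℤ) * TF) = true := by
  have ht₀ : 0 ≤ t := by
    by_contra! hneg
    simp [hS.1 l t hneg] at ht
  lift t to ℕ using ht₀
  have hdecomp : (t : ℤ) = ((t / TF : ℕ) : ℤ) * TF + (t % TF : ℕ) := by
    exact_mod_cast (Nat.div_add_mod' t TF).symm
  have hi : t % TF < TF - Dstar := by
    by_contra! hguard
    rw [hdecomp, hS.2.1 l _ _ hguard (Nat.mod_lt t hTF)] at ht
    exact Bool.false_ne_true ht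
  refine ⟨t / TF, t % TF, hi, hdecomp, ?_⟩
  rwa [← hS.apply_frame_add l _ hi, ← hdecomp]

end Framed

/-- binary collision profile, `TF ≥ 2D* + 1`; a framed schedule is
collision free iff whenever a link `l` is active in a frame, every `l' ∈ I l`
is inactive in the same frame. -/
theorem stmt_8 {L : Type*} (I : L → Set L) (D : L → L → ℤ)
    (Dstar TF : ℕ) (hD : ∀ l, ∀ l' ∈ I l, |D l l'| ≤ (Dstar : ℤ))
    (hTF : 2 * Dstar + 1 ≤ TF)
    (S : L → ℤ → Bool) (hS : Framed Dstar TF S) :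
    CollisionFreeB I D S ↔
      ∀ (k : ℕ) (l : L), S l ((k : ℤ) * TF) = true →
        ∀ l' ∈ I l, S l' ((k : ℤ) * TF) = false := by
  constructor
  · intro hCF k l hl l' hl'
    obtain ⟨hd₁, hd₂⟩ := abs_le.mp (hD l l' hl')
    set i := (-D l l').toNat
    have hcollide := hCF l (k * TF + i) (by rwa [hS.apply_frame_add l k (by omega)]) l' hl'
    rwa [show (k : ℤ) * TF + i + D l l' = k * TF + (D l l').toNat by omega,
      hS.apply_frame_add l' k (by omega)] at hcollide
  · intro hframe l t ht l' hl'
    obtain ⟨hd₁, hd₂⟩ := abs_le.mp (hD l l' hl')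
    obtain ⟨k, i, hi, rfl, hk⟩ := hS.exists_frame_of_apply_eq_true (by omega) ht
    exact hS.apply_eq_false_of_frameStart (by omega) (hframe k l hk l' hl') (by omega)
      (by omega)
end

section
/- Consider a network with general collision profile and a framed schedule S of frame length T_F ≥ 3D* + 1. Then S is collision free if and only if for every frame k and every link l active in frame k, for every collision set φ ∈ I(l) there is some l' ∈ φ inactive in frame k. -/
/-!
A frame consists of an active part of length `TF - D*` followed by a guard of `D*` idle
slots, and every delay `D l l'` lies in `[-D*, D*]`. Hence, if `l` transmits at offset `i` of
frame `k`, the slot `t + D l l'` lies in frame `k`, in the guard of frame `k - 1`, or before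
time `0`; in each case it is idle for `l'` as soon as `l'` is inactive in frame `k`. Conversely,
testing collision freeness at offset `D*` of frame `k` lands at an offset in `[0, 2D*]`, which
`TF ≥ 3D* + 1` keeps inside the active part of the same frame.
-/

namespace Framed

variable {L : Type*} {Dstar TF : ℕ} {S : L → ℤ → Bool}

theorem apply_add_eq_apply (hS : Framed Dstar TF S) (l : L) (k : ℕ) {j : ℤ} (hj₀ : 0 ≤ j)
    (hj : j < (TF : ℤ) - Dstar) : S l (k * TF + j) = S l (k * TF) := by
  have h := hS.2.2 l k j.toNat 0 (by omega) (by omega)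
  rwa [Int.toNat_of_nonneg hj₀, Nat.cast_zero, add_zero] at h

theorem apply_add_eq_false (hS : Framed Dstar TF S) (l : L) (k : ℕ) {j : ℤ}
    (hj₀ : 0 ≤ j) (hj₁ : (TF : ℤ) - Dstar ≤ j) (hj : j < TF) :
    S l (k * TF + j) = false := by
  have h := hS.2.1 l k j.toNat (by omega) (by omega)
  rwa [Int.toNat_of_nonneg hj₀] at h

theorem apply_add_eq_false_of_inactive (hS : Framed Dstar TF S) (hTF : Dstar ≤ TF)
    {l : L} {k : ℕ} (hl : S l (k * TF) = false) {j : ℤ} (hj₀ : -(Dstar : ℤ) ≤ j)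
    (hj : j < TF) :
    S l (k * TF + j) = false := by
  rcases lt_or_ge j 0 with hneg | hnonneg
  · cases k with
    | zero => exact hS.1 l _ (by simpa using hneg)
    | succ m =>
      have h := hS.apply_add_eq_false l m (j := TF + j) (by omega) (by omega) (by omega)
      rwa [show (m : ℤ) * TF + (TF + j) = ((m + 1 : ℕ) : ℤ) * TF + j by push_cast; ring]
        at h
  · rcases lt_or_ge j ((TF : ℤ) - Dstar) with hact | hguard
    · rw [hS.apply_add_eq_apply l k hnonneg hact, hl]
    · exact hS.apply_add_eq_false l k hnonneg hguard hj

theorem exists_eq_add_of_apply_eq_true (hS : Framed Dstar TF S) (hTF : 0 < TF) {l : L} {t : ℤ}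
    (ht : S l t = true) :
    ∃ (k : ℕ) (i : ℤ), 0 ≤ i ∧ i < (TF : ℤ) - Dstar ∧ t = k * TF + i := by
  have ht₀ : 0 ≤ t := by
    by_contra! h
    simp [hS.1 l t h] at ht
  have hTF' : (0 : ℤ) < TF := by exact_mod_cast hTF
  refine ⟨(t / TF).toNat, t % TF, Int.emod_nonneg _ hTF'.ne', ?_, ?_⟩
  · by_contra! hguard
    have h := hS.apply_add_eq_false l (t / TF).toNat (Int.emod_nonneg _ hTF'.ne') hguard
      (Int.emod_lt_of_pos _ hTF')
    rw [Int.toNat_of_nonneg (Int.ediv_nonneg ht₀ hTF'.le), Int.ediv_mul_add_emod] at h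
    simp [h] at ht
  · rw [Int.toNat_of_nonneg (Int.ediv_nonneg ht₀ hTF'.le), Int.ediv_mul_add_emod]

end Framed

/-- general collision profile, `TF ≥ 3D* + 1`; a framed schedule
is collision free iff whenever a link `l` is active in a frame, every
collision set `φ ∈ I l` contains a link inactive in the same frame. -/
theorem stmt_9 {L : Type*} (I : L → Set (Set L)) (D : L → L → ℤ)
    (Dstar TF : ℕ) (hD : ∀ l, ∀ φ ∈ I l, ∀ l' ∈ φ, |D l l'| ≤ (Dstar : ℤ))
    (hTF : 3 * Dstar + 1 ≤ TF)
    (S : L → ℤ → Bool) (hS : Framed Dstar TF S) :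
    CollisionFree I D S ↔
      ∀ (k : ℕ) (l : L), S l ((k : ℤ) * TF) = true →
        ∀ φ ∈ I l, ∃ l' ∈ φ, S l' ((k : ℤ) * TF) = false := by
  constructor
  · intro hCF k l hl φ hφ
    have hl' : S l (k * TF + Dstar) = true := by
      rwa [hS.apply_add_eq_apply l k (by positivity) (by omega)]
    obtain ⟨l', hl'φ, hfalse⟩ := hCF l _ hl' φ hφ
    have hd := abs_le.mp (hD l φ hφ l' hl'φ)
    refine ⟨l', hl'φ, ?_⟩
    rwa [add_assoc, hS.apply_add_eq_apply l' k (by omega) (by omega)] at hfalse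
  · intro hframe l t ht φ hφ
    obtain ⟨k, i, hi₀, hi, rfl⟩ := hS.exists_eq_add_of_apply_eq_true (by omega) ht
    rw [hS.apply_add_eq_apply l k hi₀ hi] at ht
    obtain ⟨l', hl'φ, hinactive⟩ := hframe k l ht φ hφ
    have hd := abs_le.mp (hD l φ hφ l' hl'φ)
    refine ⟨l', hl'φ, ?_⟩
    rw [add_assoc]
    exact hS.apply_add_eq_false_of_inactive (by omega) hinactive (by omega) (by omega)
end

section
/- For a network N with binary collision profile, the rate vector of any collision-free framed schedule of frame length T_F ≥ 2D* + 1, when it exists, lies in (1 − D*/T_F) · conv(indicator vectors of independent sets of the conflict graph (L, I)), and in particular in the convex hull of indicator vectors of independent sets of (L, I). -/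
open scoped Classical

open Filter
open scoped Pointwise

/-- Independent set of the conflict graph `(L, I)`. -/
def IndepB {L : Type*} (I : L → Set L) (A : Set L) : Prop :=
  ∀ l ∈ A, ∀ l' ∈ I l, l' ∉ A

/-- Indicator vector of a subset of links. -/
noncomputable def indVec {L : Type*} (A : Set L) : L → ℝ :=
  fun l => if l ∈ A then 1 else 0

/-- Average over `t = 0, …, T−1` of the indicator of collision-free activity. -/
noncomputable def rateAvgB {L : Type*} (I : L → Set L) (D : L → L → ℤ)
    (S : L → ℤ → Bool) (l : L) (T : ℕ) : ℝ :=
  (∑ t ∈ Finset.range T,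
      if S l (t : ℤ) = true ∧ ∀ l' ∈ I l, S l' ((t : ℤ) + D l l') = false
      then (1 : ℝ) else 0) / T

/-!
In every frame the set of active links is independent: a link active in a frame transmits during
the first `T_F − D*` slots, and since `|D l l'| ≤ D* < T_F − D*` a conflicting link active in the
same frame would be received at one of those slots, a collision. Collision-freeness makes the
rate indicator equal to the activity indicator, so the average rate over the first `n` frames is
`(1 − D*/T_F)` times the average of the indicator vectors of the `n` active sets, a point of the
convex hull of independent-set indicators. That hull is spanned by finitely many points, hence
closed, so it contains the limit. The second claim follows since the hull is convex, contains
`0 = indVec ∅`, and `0 < 1 − D*/T_F ≤ 1`.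
-/

open Finset

theorem Finset.sum_range_mul_eq_sum_sum {M : Type*} [AddCommMonoid M] (f : ℕ → M) (n m : ℕ) :
    ∑ t ∈ range (n * m), f t = ∑ k ∈ range n, ∑ i ∈ range m, f (k * m + i) := by
  induction n with
  | zero => simp
  | succ n ih => rw [Nat.succ_mul, sum_range_add, ih, sum_range_succ]

theorem Finset.sum_range_ite_lt {M : Type*} [AddCommMonoid M] {m n : ℕ} (h : m ≤ n) (c : M) :
    ∑ i ∈ range n, (if i < m then c else 0) = m • c := by
  rw [← sum_filter, sum_const,
    show (range n).filter (· < m) = range m by ext i; simp only [mem_filter, mem_range]; omega,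
    card_range]

theorem average_mem_convexHull {E : Type*} [AddCommGroup E] [Module ℝ E] {s : Set E}
    {x : ℕ → E} (hx : ∀ k, x k ∈ s) {n : ℕ} (hn : 0 < n) :
    (n : ℝ)⁻¹ • ∑ k ∈ range n, x k ∈ convexHull ℝ s := by
  have hcm := (range n).centerMass_mem_convexHull (w := fun _ => (1 : ℝ))
    (fun _ _ => zero_le_one) (by simpa using hn) (fun k _ => hx k)
  simpa [Finset.centerMass] using hcm

theorem mem_convexHull_of_tendsto_average {E : Type*} [AddCommGroup E] [Module ℝ E]
    [TopologicalSpace E] {s : Set E} (hs : IsClosed (convexHull ℝ s)) {x : ℕ → E}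
    (hx : ∀ k, x k ∈ s) {c : E}
    (hc : Tendsto (fun n : ℕ => (n : ℝ)⁻¹ • ∑ k ∈ range n, x k) atTop (nhds c)) :
    c ∈ convexHull ℝ s :=
  hs.mem_of_tendsto hc <| (eventually_gt_atTop 0).mono fun _ hn => average_mem_convexHull hx hn

section FramedSchedule

variable {L : Type*} {I : L → Set L} {D : L → L → ℤ} {Dstar TF : ℕ} {S : L → ℤ → Bool}

def frameActiveSet (TF : ℕ) (S : L → ℤ → Bool) (k : ℕ) : Set L :=
  {l | S l ((k : ℤ) * TF) = true}

theorem CollisionFreeB.rateAvgB_eq (hcf : CollisionFreeB I D S) (l : L) (T : ℕ) :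
    rateAvgB I D S l T = (∑ t ∈ range T, if S l (t : ℤ) = true then (1 : ℝ) else 0) / T := by
  unfold rateAvgB
  congr 1
  exact sum_congr rfl fun t _ => if_congr ⟨And.left, fun h => ⟨h, hcf l t h⟩⟩ rfl rfl

theorem Framed.apply_frame_add_s10 (hS : Framed Dstar TF S) (l : L) (k : ℕ) {i : ℤ}
    (hi₀ : 0 ≤ i) (hi : i < (TF - Dstar : ℕ)) : S l (k * TF + i) = S l (k * TF) := by
  lift i to ℕ using hi₀
  simpa using hS.2.2 l k i 0 (by omega) (by omega)

theorem Framed.indepB_frameActiveSet (hS : Framed Dstar TF S) (hcf : CollisionFreeB I D S)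
    (hD : ∀ l, ∀ l' ∈ I l, |D l l'| ≤ (Dstar : ℤ)) (hTF : 2 * Dstar < TF) (k : ℕ) :
    IndepB I (frameActiveSet TF S k) := by
  intro l hl l' hl' hl'_act
  have hDll' := abs_le.mp (hD l l' hl')
  -- Transmit at offset `max 0 (-D l l')`, so that the reception offset is `max (D l l') 0`;
  -- both lie in `[0, D*]`, inside the active part of the frame.
  have h_tx : S l (k * TF + max 0 (-D l l')) = true := by
    rw [hS.apply_frame_add_s10 l k (le_max_left _ _) (by omega)]
    exact hl
  have h_rx := hcf l _ h_tx l' hl'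
  rw [add_assoc, show max 0 (-D l l') + D l l' = max (D l l') 0 by omega,
    hS.apply_frame_add_s10 l' k (le_max_right _ _) (by omega)] at h_rx
  exact absurd hl'_act (by simp [frameActiveSet, h_rx])

theorem Framed.sum_activity_frame (hS : Framed Dstar TF S) (l : L) (k : ℕ) :
    ∑ i ∈ range TF, (if S l ((k * TF + i : ℕ) : ℤ) = true then (1 : ℝ) else 0) =
      (TF - Dstar : ℕ) * indVec (frameActiveSet TF S k) l := by
  calc _ = ∑ i ∈ range TF,
        if i < TF - Dstar then indVec (frameActiveSet TF S k) l else 0 := by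
        refine sum_congr rfl fun i hi => ?_
        push_cast
        by_cases hi_act : i < TF - Dstar
        · rw [if_pos hi_act, hS.apply_frame_add_s10 l k (Nat.cast_nonneg i) (by exact_mod_cast hi_act)]
          exact if_congr Iff.rfl rfl rfl
        · simp [hi_act, hS.2.1 l k i (not_lt.mp hi_act) (mem_range.mp hi)]
    _ = _ := by rw [sum_range_ite_lt (Nat.sub_le TF Dstar), nsmul_eq_mul]

theorem Framed.rateAvgB_mul_eq (hS : Framed Dstar TF S) (hcf : CollisionFreeB I D S) (l : L)
    (n : ℕ) :
    rateAvgB I D S l (n * TF) = ((TF - Dstar : ℕ) / TF : ℝ) *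
      ((n : ℝ)⁻¹ * ∑ k ∈ range n, indVec (frameActiveSet TF S k) l) := by
  rw [hcf.rateAvgB_eq, sum_range_mul_eq_sum_sum, sum_congr rfl fun k _ => hS.sum_activity_frame l k,
    ← mul_sum]
  push_cast
  ring

end FramedSchedule

/-- the rate vector of a collision-free framed schedule of frame
length `TF ≥ 2D* + 1`, when it exists, lies in
`(1 − D*/TF) · conv{indicators of independent sets}` and hence in
`conv{indicators of independent sets}`. -/
theorem stmt_10 {L : Type*} [Fintype L] (I : L → Set L) (D : L → L → ℤ)
    (Dstar TF : ℕ) (hD : ∀ l, ∀ l' ∈ I l, |D l l'| ≤ (Dstar : ℤ))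
    (hTF : 2 * Dstar + 1 ≤ TF)
    (S : L → ℤ → Bool) (hS : Framed Dstar TF S)
    (hcf : CollisionFreeB I D S)
    (r : L → ℝ) (hr : ∀ l, Tendsto (rateAvgB I D S l) atTop (nhds (r l))) :
    r ∈ (1 - (Dstar : ℝ) / TF) •
        convexHull ℝ {f : L → ℝ | ∃ A, IndepB I A ∧ f = indVec A} ∧
    r ∈ convexHull ℝ {f : L → ℝ | ∃ A, IndepB I A ∧ f = indVec A} := by
  set s := {f : L → ℝ | ∃ A, IndepB I A ∧ f = indVec A}
  set a : ℝ := 1 - (Dstar : ℝ) / TF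
  have ha : a = ((TF - Dstar : ℕ) / TF : ℝ) := by
    rw [Nat.cast_sub (by omega), sub_div, div_self (Nat.cast_ne_zero.mpr (by omega))]
  have ha₀ : 0 < a := ha ▸ div_pos (Nat.cast_pos.mpr (by omega)) (Nat.cast_pos.mpr (by omega))
  have ha₁ : a ≤ 1 := sub_le_self _ (by positivity)
  set x : ℕ → L → ℝ := fun k => indVec (frameActiveSet TF S k)
  have hx : ∀ k, x k ∈ s := fun k => ⟨_, hS.indepB_frameActiveSet hcf hD (by omega) k, rfl⟩
  have hlim : Tendsto (fun n : ℕ => (n : ℝ)⁻¹ • ∑ k ∈ range n, x k) atTop (nhds (a⁻¹ • r)) := by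
    refine tendsto_pi_nhds.mpr fun l => ?_
    refine (((hr l).comp (tendsto_id.atTop_mul_const' (show 0 < TF by omega))).const_mul
      a⁻¹).congr fun n => ?_
    simp only [Function.comp_apply, id, hS.rateAvgB_mul_eq hcf, ← ha, inv_mul_cancel_left₀ ha₀.ne',
      Pi.smul_apply, Finset.sum_apply, smul_eq_mul, x]
  have hs : IsClosed (convexHull ℝ s) :=
    ((Set.finite_range indVec).subset fun _ ⟨A, _, hf⟩ => ⟨A, hf.symm⟩ :
      s.Finite).isClosed_convexHull ℝ
  have hc : a⁻¹ • r ∈ convexHull ℝ s := mem_convexHull_of_tendsto_average hs hx hlim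
  have h₀ : (0 : L → ℝ) ∈ convexHull ℝ s :=
    subset_convexHull ℝ s (show (0 : L → ℝ) ∈ s from
      ⟨∅, fun _ h => h.elim, funext fun _ => by simp [indVec]⟩)
  rw [← smul_inv_smul₀ ha₀.ne' r]
  exact ⟨Set.smul_mem_smul_set hc,
    (convex_convexHull ℝ s).smul_mem_of_zero_mem h₀ hc (Set.mem_Icc.mpr ⟨ha₀.le, ha₁⟩)⟩
end

section
/- If S is a collision-free schedule of period K·T (so S[T, i+K] = S[T, i] for all i), then (S[T,0], S[T,1], ..., S[T,K]) is a closed path in the scheduling graph (M_T, E_T), and the rate vector R_S = (1/(KT)) Σ_{i=0}^{K−1} S[T,i]·𝟙 lies in the convex hull of the rate vectors of the cycles of (M_T, E_T). -/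
/-- Vertex set of the scheduling graph. -/
def MT {L : Type*} (I : L → Set (Set L)) (D : L → L → ℤ) (T : ℕ) :
    Set (L → Fin T → Bool) :=
  {A | ∃ S, CollisionFree I D S ∧ A = blk S T 0}

/-- Edge set of the scheduling graph. -/
def ET {L : Type*} (I : L → Set (Set L)) (D : L → L → ℤ) (T : ℕ) :
    Set ((L → Fin T → Bool) × (L → Fin T → Bool)) :=
  {p | ∃ S, CollisionFree I D S ∧ p.1 = blk S T 0 ∧ p.2 = blk S T 1}

/-- A cycle of length `k` in the scheduling graph: a closed path whose first
`k` vertices are pairwise distinct. -/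
def IsCycle {L : Type*} (I : L → Set (Set L)) (D : L → L → ℤ) (T : ℕ)
    (k : ℕ) (C : ℕ → (L → Fin T → Bool)) : Prop :=
  1 ≤ k ∧ C k = C 0 ∧
  (∀ i < k, C i ∈ MT I D T ∧ (C i, C (i + 1)) ∈ ET I D T) ∧
  (∀ i < k, ∀ j < k, C i = C j → i = j)

/-- Rate vector `R_C` of a closed path of length `k` in `(M_T, E_T)`. -/
noncomputable def cycRate {L : Type*} (T k : ℕ) (C : ℕ → (L → Fin T → Bool)) :
    L → ℝ :=
  fun l => (∑ i ∈ Finset.range k, ∑ j : Fin T,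
      if C i l j then (1 : ℝ) else 0) / ((k : ℝ) * (T : ℝ))

/-!
Shifting a collision-free schedule by a multiple of `T` keeps it collision free, so consecutive
blocks `S[T,i] → S[T,i+1]` are edges of the scheduling graph, and periodicity closes the path.
The rate vector of a closed walk is the average along it of the per-block rate. If the walk
repeats a vertex, rotate it so that the repetition sits at positions `0` and `d`, and cut it
there into closed walks of lengths `d` and `k - d`: its average is the convex combination of
their averages with weights `d / k` and `(k - d) / k`. Strong induction on the length then puts
the average in the convex hull of the averages of the cycles.
-/

open Finset

theorem Finset.sum_range_add_mod {M : Type*} [AddCommMonoid M] (g : ℕ → M) {k : ℕ}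
    (hk : 0 < k) (i : ℕ) : ∑ m ∈ range k, g ((i + m) % k) = ∑ m ∈ range k, g m := by
  have : NeZero k := ⟨hk.ne'⟩
  simp only [Finset.sum_range]
  exact Fintype.sum_equiv (Equiv.addLeft (Fin.ofNat k i)) _ _ fun m => by simp [Fin.val_add]

section ClosedWalk

variable {V E : Type*} [AddCommGroup E] [Module ℝ E]

def IsClosedWalk (r : V → V → Prop) (k : ℕ) (C : ℕ → V) : Prop :=
  C k = C 0 ∧ ∀ i < k, r (C i) (C (i + 1))

def IsSimpleClosedWalk (r : V → V → Prop) (k : ℕ) (C : ℕ → V) : Prop :=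
  1 ≤ k ∧ IsClosedWalk r k C ∧ ∀ i < k, ∀ j < k, C i = C j → i = j

noncomputable def walkAverage (f : V → E) (k : ℕ) (C : ℕ → V) : E :=
  (k : ℝ)⁻¹ • ∑ i ∈ range k, f (C i)

namespace IsClosedWalk

variable {r : V → V → Prop} {k : ℕ} {C : ℕ → V}

theorem adj_mod (hC : IsClosedWalk r k C) (hk : 0 < k) (n : ℕ) :
    r (C (n % k)) (C ((n + 1) % k)) := by
  have hstep := hC.2 (n % k) (Nat.mod_lt n hk)
  rw [← Nat.mod_add_mod]
  obtain h | h := (Nat.add_one_le_iff.mpr (Nat.mod_lt n hk)).lt_or_eq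
  · rwa [Nat.mod_eq_of_lt h]
  · rw [h, Nat.mod_self, ← hC.1]
    rwa [h] at hstep

theorem rotate (hC : IsClosedWalk r k C) (hk : 0 < k) (i : ℕ) :
    IsClosedWalk r k (fun m => C ((i + m) % k)) :=
  ⟨by simp only [Nat.add_zero, Nat.add_mod_right],
    fun m _ => by simpa only [← add_assoc] using hC.adj_mod hk (i + m)⟩

theorem take (hC : IsClosedWalk r k C) {a : ℕ} (ha : a ≤ k) (h : C a = C 0) :
    IsClosedWalk r a C :=
  ⟨h, fun i hi => hC.2 i (by omega)⟩

theorem drop (hC : IsClosedWalk r k C) {a : ℕ} (ha : a ≤ k) (h : C a = C 0) :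
    IsClosedWalk r (k - a) (fun m => C (a + m)) :=
  ⟨by dsimp only; rw [Nat.add_sub_cancel' ha, hC.1, add_zero, h],
    fun i hi => by simpa only [add_assoc] using hC.2 (a + i) (by omega)⟩

end IsClosedWalk

theorem walkAverage_rotate (f : V → E) {k : ℕ} (hk : 0 < k) (C : ℕ → V) (i : ℕ) :
    walkAverage f k (fun m => C ((i + m) % k)) = walkAverage f k C := by
  simp only [walkAverage, sum_range_add_mod (fun m => f (C m)) hk]

theorem walkAverage_eq_add (f : V → E) {k a : ℕ} (ha : 0 < a) (hak : a < k) (C : ℕ → V) :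
    walkAverage f k C = ((a : ℝ) / k) • walkAverage f a C +
      (((k - a : ℕ) : ℝ) / k) • walkAverage f (k - a) (fun m => C (a + m)) := by
  obtain ⟨b, rfl⟩ := Nat.exists_eq_add_of_le hak.le
  have hb : 0 < b := by omega
  rw [Nat.add_sub_cancel_left]
  simp only [walkAverage, sum_range_add, smul_add, smul_smul]
  congr 2 <;> field_simp

theorem walkAverage_mem_convexHull {r : V → V → Prop} (f : V → E) {k : ℕ} (hk : 1 ≤ k)
    {C : ℕ → V} (hC : IsClosedWalk r k C) :
    walkAverage f k C ∈
      convexHull ℝ {x | ∃ n c, IsSimpleClosedWalk r n c ∧ x = walkAverage f n c} := by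
  induction k using Nat.strong_induction_on generalizing C with
  | _ k ih =>
  by_cases hsimple : ∀ i < k, ∀ j < k, C i = C j → i = j
  · exact subset_convexHull ℝ _ ⟨k, C, ⟨hk, hC, hsimple⟩, rfl⟩
  push Not at hsimple
  obtain ⟨i, hi, j, hj, hij, hne⟩ := hsimple
  wlog hlt : i < j generalizing i j
  · exact this j hj i hi hij.symm hne.symm (by omega)
  -- rotating by `i` moves the repeated vertex to positions `0` and `j - i`
  have hrep : C ((i + (j - i)) % k) = C ((i + 0) % k) := by
    rw [Nat.add_sub_cancel' hlt.le, add_zero, Nat.mod_eq_of_lt hj, Nat.mod_eq_of_lt hi, hij]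
  have hrot := hC.rotate (by omega) i
  rw [← walkAverage_rotate f (by omega) C i,
    walkAverage_eq_add f (a := j - i) (by omega) (by omega)]
  refine convex_convexHull ℝ _ (ih _ (by omega) (by omega) (hrot.take (by omega) hrep))
    (ih _ (by omega) (by omega) (hrot.drop (by omega) hrep)) (by positivity) (by positivity) ?_
  rw [← add_div, ← Nat.cast_add, Nat.add_sub_cancel' (by omega), div_self (by positivity)]

end ClosedWalk

section Schedule

variable {L : Type*} {I : L → Set (Set L)} {D : L → L → ℤ} {T : ℕ} {S : L → ℤ → Bool}

theorem CollisionFree.comp_add_right (hcf : CollisionFree I D S) (c : ℤ) :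
    CollisionFree I D (fun l t => S l (t + c)) := by
  intro l t hlt φ hφ
  obtain ⟨l', hl', hf⟩ := hcf l (t + c) hlt φ hφ
  exact ⟨l', hl', by rwa [add_right_comm] at hf⟩

theorem blk_add (S : L → ℤ → Bool) (T : ℕ) (i m : ℤ) :
    blk S T (i + m) = blk (fun l t => S l (t + i * T)) T m := by
  funext l j
  simp only [blk]
  congr 1
  ring

theorem blk_mem_ET (hcf : CollisionFree I D S) (i : ℤ) :
    (blk S T i, blk S T (i + 1)) ∈ ET I D T :=
  ⟨_, hcf.comp_add_right (i * T), by simpa using blk_add S T i 0, blk_add S T i 1⟩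

theorem fst_mem_MT_of_mem_ET {p : (L → Fin T → Bool) × (L → Fin T → Bool)}
    (hp : p ∈ ET I D T) : p.1 ∈ MT I D T :=
  let ⟨S, hS, h1, _⟩ := hp
  ⟨S, hS, h1⟩

theorem IsSimpleClosedWalk.isCycle {k : ℕ} {C : ℕ → L → Fin T → Bool}
    (hC : IsSimpleClosedWalk (fun A B => (A, B) ∈ ET I D T) k C) : IsCycle I D T k C :=
  let ⟨hk, ⟨hclosed, hedge⟩, hinj⟩ := hC
  ⟨hk, hclosed, fun i hi => ⟨fst_mem_MT_of_mem_ET (hedge i hi), hedge i hi⟩, hinj⟩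

theorem blk_eq_blk_zero_of_periodic {K : ℕ}
    (hper : ∀ l t, S l (t + ((K * T : ℕ) : ℤ)) = S l t) : blk S T K = blk S T 0 := by
  funext l j
  simpa [blk, add_comm] using hper l j

noncomputable def blockRate (T : ℕ) (A : L → Fin T → Bool) : L → ℝ :=
  fun l => (∑ j : Fin T, if A l j then (1 : ℝ) else 0) / T

theorem cycRate_eq_walkAverage (k : ℕ) (C : ℕ → L → Fin T → Bool) :
    cycRate T k C = walkAverage (blockRate T) k C := by
  funext l
  simp only [cycRate, walkAverage, blockRate, Pi.smul_apply, Finset.sum_apply, smul_eq_mul,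
    ← Finset.sum_div]
  rw [inv_mul_eq_div, div_div, mul_comm]

end Schedule

theorem stmt_12_general {L : Type*} (I : L → Set (Set L)) (D : L → L → ℤ)
    (T K : ℕ) (hK : 1 ≤ K)
    (S : L → ℤ → Bool) (hcf : CollisionFree I D S)
    (hper : ∀ l t, S l (t + ((K * T : ℕ) : ℤ)) = S l t) :
    ((∀ i < K, blk S T (i : ℤ) ∈ MT I D T ∧
        (blk S T (i : ℤ), blk S T ((i : ℤ) + 1)) ∈ ET I D T) ∧
      blk S T (K : ℤ) = blk S T 0) ∧
    cycRate T K (fun i : ℕ => blk S T (i : ℤ)) ∈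
      convexHull ℝ {R : L → ℝ | ∃ k C, IsCycle I D T k C ∧ R = cycRate T k C} := by
  have hclosed : blk S T K = blk S T 0 := blk_eq_blk_zero_of_periodic hper
  have hwalk : IsClosedWalk (fun A B => (A, B) ∈ ET I D T) K (fun i : ℕ => blk S T i) :=
    ⟨hclosed, fun i _ => by simpa using blk_mem_ET hcf i⟩
  refine ⟨⟨fun i _ => ⟨fst_mem_MT_of_mem_ET (blk_mem_ET hcf i), blk_mem_ET hcf i⟩, hclosed⟩, ?_⟩
  rw [cycRate_eq_walkAverage]
  refine convexHull_mono ?_ (walkAverage_mem_convexHull (blockRate T) hK hwalk)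
  rintro _ ⟨k, C, hC, rfl⟩
  exact ⟨k, C, hC.isCycle, (cycRate_eq_walkAverage k C).symm⟩

/-- a collision-free schedule `S` of period `K·T` yields a closed
path `(S[T,0], …, S[T,K])` in `(M_T, E_T)`, and its rate vector lies in the
convex hull of the rate vectors of the cycles of `(M_T, E_T)`. -/
theorem stmt_12 {L : Type*} (I : L → Set (Set L)) (D : L → L → ℤ)
    (T K : ℕ) (hT : 1 ≤ T) (hK : 1 ≤ K)
    (S : L → ℤ → Bool) (hcf : CollisionFree I D S)
    (hper : ∀ l t, S l (t + ((K * T : ℕ) : ℤ)) = S l t) :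
    ((∀ i < K, blk S T (i : ℤ) ∈ MT I D T ∧
        (blk S T (i : ℤ), blk S T ((i : ℤ) + 1)) ∈ ET I D T) ∧
      blk S T (K : ℤ) = blk S T 0) ∧
    cycRate T K (fun i : ℕ => blk S T (i : ℤ)) ∈
      convexHull ℝ {R : L → ℝ | ∃ k C, IsCycle I D T k C ∧ R = cycRate T k C} :=
  stmt_12_general I D T K hK S hcf hper
end
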